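/- Let B be a simple bipartite graph with bipartition V(B) = W ⊎ U, G its half-square, D = (T, β_D) a nice tree decomposition of B, and D' = (T, β_{D'}) the derived decomposition of G. Let t ∈ V(T) and v ∈ Fake(t). Then: (i) there is exactly one node t' of T that is a forget(v) node of D satisfying v ∈ Fake(t') (a fake-introduce(v) node); (ii) t = t' or t is an ancestor of t'; and (iii) for every node t'' on the unique path in T between t and t', v ∈ Fake(t''). -/

import Mathlib

open SimpleGraph

section Defs

variable {V : Type*} {ι : Type*}

/-- `W, U` is a bipartition of the simple graph `B`. -/
def IsBipartition (B : SimpleGraph V) (W U : Set V) : Prop :=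
  (∀ v, v ∈ W ∨ v ∈ U) ∧ (∀ v, ¬(v ∈ W ∧ v ∈ U)) ∧
    ∀ ⦃a b⦄, B.Adj a b → (a ∈ W ∧ b ∈ U) ∨ (a ∈ U ∧ b ∈ W)

/-- The half-square of `B` on side `W`: two distinct vertices of `W` are adjacent
iff they have a common neighbor in `B`. -/
def halfSquare (B : SimpleGraph V) (W : Set V) : SimpleGraph V where
  Adj a b := a ≠ b ∧ a ∈ W ∧ b ∈ W ∧ ∃ s, B.Adj a s ∧ B.Adj b s
  symm := by
    constructor
    rintro a b ⟨hne, ha, hb, s, h1, h2⟩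
    exact ⟨hne.symm, hb, ha, s, h2, h1⟩
  loopless := by constructor; rintro a ⟨hne, _⟩; exact hne rfl

/-- Tree decomposition of the graph `H` with vertex set `S`, over the tree `T`. -/
structure IsTreeDecompOn (H : SimpleGraph V) (S : Set V) (T : SimpleGraph ι)
    (β : ι → Set V) : Prop where
  covers : ∀ v ∈ S, ∃ t, v ∈ β t
  edge_mem : ∀ ⦃u v⦄, H.Adj u v → ∃ t, u ∈ β t ∧ v ∈ β t
  conn : ∀ v ∈ S, (T.induce {t | v ∈ β t}).Connected

/-- `t'` is a descendant of `t` (inclusively) in the tree `T` rooted at `r`: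
`t` lies on every path from `t'` to the root. -/
def Desc (T : SimpleGraph ι) (r : ι) (t t' : ι) : Prop :=
  ∀ p : T.Walk t' r, p.IsPath → t ∈ p.support

/-- `γ(t)`: union of the bags of `t` and of all its descendants. -/
def gammaSet (T : SimpleGraph ι) (r : ι) (β : ι → Set V) (t : ι) : Set V :=
  ⋃ t' ∈ {t' | Desc T r t t'}, β t'

/-- The bag of the derived decomposition. -/
def derivedBag (B : SimpleGraph V) (W U : Set V) (T : SimpleGraph ι) (r : ι)
    (β : ι → Set V) (t : ι) : Set V :=
  (β t ∩ W) ∪ ⋃ s ∈ β t ∩ U, B.neighborSet s ∩ gammaSet T r β t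

def originalSet (B : SimpleGraph V) (W U : Set V) (T : SimpleGraph ι) (r : ι)
    (β : ι → Set V) (t : ι) : Set V :=
  β t ∩ derivedBag B W U T r β t

def fakeSet (B : SimpleGraph V) (W U : Set V) (T : SimpleGraph ι) (r : ι)
    (β : ι → Set V) (t : ι) : Set V :=
  derivedBag B W U T r β t \ β t

def cliquesAt (B : SimpleGraph V) (U : Set V) (β : ι → Set V) (t : ι) : Set (Set V) :=
  {K | ∃ s ∈ β t ∩ U, K = B.neighborSet s}

def IsChild (T : SimpleGraph ι) (r : ι) (t t' : ι) : Prop :=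
  T.Adj t t' ∧ Desc T r t t'

def IsLeafNode (T : SimpleGraph ι) (r : ι) (β : ι → Set V) (t : ι) : Prop :=
  (∀ t', ¬ IsChild T r t t') ∧ β t = ∅

def IsForgetNode (T : SimpleGraph ι) (r : ι) (β : ι → Set V) (w : V) (t : ι) : Prop :=
  ∃ t', IsChild T r t t' ∧ (∀ t'', IsChild T r t t'' → t'' = t') ∧
    w ∈ β t' ∧ β t = β t' \ {w}

def IsIntroduceNode (T : SimpleGraph ι) (r : ι) (β : ι → Set V) (w : V) (t : ι) : Prop :=
  ∃ t', IsChild T r t t' ∧ (∀ t'', IsChild T r t t'' → t'' = t') ∧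
    w ∈ β t ∧ β t \ {w} = β t'

def IsJoinNode (T : SimpleGraph ι) (r : ι) (β : ι → Set V) (t : ι) : Prop :=
  ∃ t₁ t₂, t₁ ≠ t₂ ∧ IsChild T r t t₁ ∧ IsChild T r t t₂ ∧
    (∀ t'', IsChild T r t t'' → t'' = t₁ ∨ t'' = t₂) ∧ β t = β t₁ ∧ β t = β t₂

/-- A nice (rooted) tree decomposition. -/
def IsNice (T : SimpleGraph ι) (r : ι) (β : ι → Set V) : Prop :=
  β r = ∅ ∧ ∀ t, IsLeafNode T r β t ∨ (∃ w, IsForgetNode T r β w t) ∨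
    (∃ w, IsIntroduceNode T r β w t) ∨ IsJoinNode T r β t

/-- `E(X)`: edges of `G` with both endpoints in `X`. -/
def edgesIn (G : SimpleGraph V) (X : Set V) : Set (Sym2 V) :=
  {e | e ∈ G.edgeSet ∧ ∀ x ∈ e, x ∈ X}

end Defs

/-!
The nodes whose bags contain `v` form a subtree; let `m` be its top node. Since `β r = ∅`,
`m` has a parent `t'`, and `v ∉ β t'`, so niceness forces `t'` to be a forget(`v`) node;
conversely the child of any forget(`v`) node lies in the subtree, and its parent does not, so
that child is `m` and the node is `t'`. If `v ∈ Fake(t)` is witnessed by `s ∈ β t ∩ U`, then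
`t` lies strictly above `m`. For every `x` on the path from `t` down to `t'`, the vertex `s`
stays in `β x` (it also shares a bag with `v` below `m`), `v ∉ β x`, and `v ∈ β m ⊆ γ(x)`;
hence `v ∈ Fake(x)`.
-/

namespace SimpleGraph.IsTree

variable {ι : Type*} {T : SimpleGraph ι}

noncomputable def path (hT : T.IsTree) (a b : ι) : T.Walk a b :=
  (hT.existsUnique_path a b).exists.choose

lemma isPath_path (hT : T.IsTree) (a b : ι) : (hT.path a b).IsPath :=
  (hT.existsUnique_path a b).exists.choose_spec

lemma eq_path (hT : T.IsTree) {a b : ι} {p : T.Walk a b} (hp : p.IsPath) : p = hT.path a b :=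
  (hT.existsUnique_path a b).unique hp (hT.isPath_path a b)

lemma path_eq_append (hT : T.IsTree) {x y z : ι} (h : y ∈ (hT.path x z).support) :
    hT.path x z = (hT.path x y).append (hT.path y z) := by
  classical
  rw [← (hT.path x z).take_spec h, ← hT.eq_path ((hT.isPath_path x z).takeUntil h),
    ← hT.eq_path ((hT.isPath_path x z).dropUntil h)]

lemma path_of_adj (hT : T.IsTree) {a b : ι} (h : T.Adj a b) : hT.path a b = .cons h .nil :=
  (hT.eq_path (by simp [Walk.isPath_def, h.ne])).symm

lemma mem_of_mem_support_path (hT : T.IsTree) {S : Set ι} (hS : (T.induce S).Connected)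
    {x y z : ι} (hx : x ∈ S) (hy : y ∈ S) (hz : z ∈ (hT.path x y).support) : z ∈ S := by
  classical
  obtain ⟨p⟩ := hS.preconnected ⟨x, hx⟩ ⟨y, hy⟩
  let q : T.Walk x y := p.map (Embedding.induce S).toHom
  rw [← hT.eq_path q.bypass_isPath] at hz
  obtain ⟨⟨z, hz'⟩, -, rfl⟩ := List.mem_map.mp (Walk.support_map _ _ ▸
    q.support_bypass_subset_support hz)
  exact hz'

end SimpleGraph.IsTree

section Rooted

variable {ι : Type*} {T : SimpleGraph ι} {r : ι}

lemma desc_iff (hT : T.IsTree) {a b : ι} : Desc T r a b ↔ a ∈ (hT.path b r).support :=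
  ⟨fun h => h _ (hT.isPath_path b r), fun h _ hp => hT.eq_path hp ▸ h⟩

lemma Desc.refl (T : SimpleGraph ι) (r t : ι) : Desc T r t t :=
  fun p _ => p.start_mem_support

lemma path_eq_append_of_desc (hT : T.IsTree) {a b : ι} (h : Desc T r a b) :
    hT.path b r = (hT.path b a).append (hT.path a r) :=
  hT.path_eq_append ((desc_iff hT).mp h)

lemma Desc.trans (hT : T.IsTree) {a b c : ι} (h₁ : Desc T r a b) (h₂ : Desc T r b c) :
    Desc T r a c := by
  rw [desc_iff hT, path_eq_append_of_desc hT h₂, Walk.mem_support_append_iff]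
  exact Or.inr ((desc_iff hT).mp h₁)

lemma Desc.antisymm (hT : T.IsTree) {a b : ι} (h₁ : Desc T r a b) (h₂ : Desc T r b a) :
    a = b := by
  have l₁ := congrArg Walk.length (path_eq_append_of_desc hT h₁)
  have l₂ := congrArg Walk.length (path_eq_append_of_desc hT h₂)
  rw [Walk.length_append] at l₁ l₂
  exact (Walk.eq_of_length_eq_zero (p := hT.path b a) (by omega)).symm

lemma desc_of_mem_support_path (hT : T.IsTree) {a b x : ι} (h : Desc T r b a)
    (hx : x ∈ (hT.path a b).support) : Desc T r b x ∧ Desc T r x a := by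
  have hsplit : hT.path a r = (hT.path a x).append ((hT.path x b).append (hT.path b r)) := by
    rw [path_eq_append_of_desc hT h, hT.path_eq_append hx, Walk.append_assoc]
  have hpath : ((hT.path x b).append (hT.path b r)).IsPath :=
    (hsplit ▸ hT.isPath_path a r).of_append_right
  constructor
  · rw [desc_iff hT, ← hT.eq_path hpath, Walk.mem_support_append_iff]
    exact Or.inr (Walk.start_mem_support _)
  · rw [desc_iff hT, hsplit, Walk.mem_support_append_iff]
    exact Or.inl (Walk.end_mem_support _)

lemma mem_support_path_of_desc (hT : T.IsTree) {a b x : ι} (h₁ : Desc T r b x)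
    (h₂ : Desc T r x a) : x ∈ (hT.path a b).support := by
  have hx := (desc_iff hT).mp h₂
  rw [path_eq_append_of_desc hT (h₁.trans hT h₂), Walk.mem_support_append_iff] at hx
  rcases hx with hx | hx
  · exact hx
  · obtain rfl := h₁.antisymm hT ((desc_iff hT).mpr hx)
    exact Walk.end_mem_support _

lemma Desc.total (hT : T.IsTree) {a b c : ι} (ha : Desc T r a c) (hb : Desc T r b c) :
    Desc T r a b ∨ Desc T r b a := by
  have hbc := (desc_iff hT).mp hb
  rw [path_eq_append_of_desc hT ha, Walk.mem_support_append_iff] at hbc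
  exact hbc.imp (fun h => (desc_of_mem_support_path hT ha h).1) (desc_iff hT).mpr

lemma path_eq_cons_of_isChild (hT : T.IsTree) {p c : ι} (h : IsChild T r p c) :
    hT.path c r = .cons h.1.symm (hT.path p r) := by
  rw [path_eq_append_of_desc hT h.2, hT.path_of_adj h.1.symm]
  rfl

lemma IsChild.unique (hT : T.IsTree) {p q c : ι} (hp : IsChild T r p c) (hq : IsChild T r q c) :
    p = q := by
  simpa using congrArg (·.getVert 1)
    ((path_eq_cons_of_isChild hT hp).symm.trans (path_eq_cons_of_isChild hT hq))

lemma Desc.of_isChild (hT : T.IsTree) {a p c : ι} (h : Desc T r a c) (hp : IsChild T r p c)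
    (hne : a ≠ c) : Desc T r a p := by
  have ha := (desc_iff hT).mp h
  rw [path_eq_cons_of_isChild hT hp, Walk.support_cons, List.mem_cons] at ha
  exact (desc_iff hT).mpr (ha.resolve_left hne)

lemma isChild_or_isChild_of_adj (hT : T.IsTree) (r : ι) {a b : ι} (h : T.Adj a b) :
    IsChild T r a b ∨ IsChild T r b a := by
  by_cases ha : a ∈ (hT.path b r).support
  · exact Or.inl ⟨h, (desc_iff hT).mpr ha⟩
  · refine Or.inr ⟨h.symm, ?_⟩
    rw [desc_iff hT, ← hT.eq_path ((hT.isPath_path b r).cons (h := h) ha)]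
    simp

lemma exists_isChild_of_ne_root (hT : T.IsTree) {c : ι} (hc : c ≠ r) :
    ∃ p, IsChild T r p c := by
  cases hcr : hT.path c r with
  | nil => exact absurd rfl hc
  | @cons _ p _ h q =>
    refine ⟨p, h.symm, (desc_iff hT).mpr ?_⟩
    rw [hcr]
    exact List.mem_cons_of_mem _ (Walk.start_mem_support _)

lemma exists_top (hT : T.IsTree) (r : ι) {S : Set ι} (hS : (T.induce S).Connected) :
    ∃ m ∈ S, ∀ x ∈ S, Desc T r m x := by
  obtain ⟨⟨x₀, hx₀⟩⟩ := hS.nonempty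
  -- a node of least depth is the top
  let depth : ι → ℕ := fun x => (hT.path x r).length
  let m := Function.argminOn depth S ⟨x₀, hx₀⟩
  have hmS : m ∈ S := Function.argminOn_mem depth S _
  refine ⟨m, hmS, fun x hx => ?_⟩
  obtain ⟨w⟩ := hS.preconnected ⟨x, hx⟩ ⟨m, hmS⟩
  suffices ∀ (y z : S) (w : (T.induce S).Walk y z), z.1 = m → Desc T r m y from this _ _ w rfl
  intro y z w hz
  induction w with
  | nil => exact hz ▸ Desc.refl T r _
  | @cons a b _ h _ ih =>
    have h : T.Adj a.1 b.1 := h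
    rcases isChild_or_isChild_of_adj hT r h with hab | hba
    · by_cases hbm : b.1 = m
      · have hlen := congrArg Walk.length (path_eq_cons_of_isChild hT hab)
        rw [Walk.length_cons, hbm] at hlen
        have hlt : depth a.1 < depth m := by simp only [depth]; omega
        exact absurd hlt (Function.not_lt_argminOn depth S a.2)
      · exact (ih hz).of_isChild hT hab (Ne.symm hbm)
    · exact (ih hz).trans hT hba.2

end Rooted

section NiceDecomposition

variable {V ι : Type*} {T : SimpleGraph ι} {r : ι} {β : ι → Set V} {v : V}

lemma mem_of_desc_of_desc (hT : T.IsTree) (hconn : (T.induce {x | v ∈ β x}).Connected)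
    {a b c : ι} (ha : v ∈ β a) (hc : v ∈ β c) (hab : Desc T r a b) (hbc : Desc T r b c) :
    v ∈ β b :=
  hT.mem_of_mem_support_path hconn hc ha (mem_support_path_of_desc hT hab hbc)

lemma mem_fakeSet_iff {B : SimpleGraph V} {W U : Set V} {t : ι} :
    v ∈ fakeSet B W U T r β t ↔
      v ∉ β t ∧ ∃ s ∈ β t ∩ U, B.Adj s v ∧ ∃ y, Desc T r t y ∧ v ∈ β y := by
  simp only [fakeSet, derivedBag, gammaSet, Set.mem_sdiff, Set.mem_union, Set.mem_inter_iff,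
    Set.mem_iUnion₂, Set.mem_ofPred_eq, mem_neighborSet, exists_prop]
  tauto

lemma isForgetNode_of_isChild (hnice : IsNice T r β) {p c : ι} (hpc : IsChild T r p c)
    (hc : v ∈ β c) (hp : v ∉ β p) : IsForgetNode T r β v p := by
  rcases hnice.2 p with hleaf | ⟨w, c', hc', huniq, -, hβ⟩ | ⟨w, c', -, huniq, -, hβ⟩ |
      ⟨c₁, c₂, -, -, -, huniq, hβ₁, hβ₂⟩
  · exact absurd hpc (hleaf.1 c)
  · obtain rfl := huniq c hpc
    obtain rfl : v = w := by
      by_contra hne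
      exact hp (hβ ▸ ⟨hc, hne⟩)
    exact ⟨c, hc', huniq, hc, hβ⟩
  · obtain rfl := huniq c hpc
    exact (hp (hβ ▸ hc : v ∈ β p \ {w}).1).elim
  · rcases huniq c hpc with rfl | rfl
    · exact (hp (hβ₁ ▸ hc)).elim
    · exact (hp (hβ₂ ▸ hc)).elim

lemma notMem_of_desc_parent_of_top (hT : T.IsTree) {m : ι}
    (htop : ∀ x ∈ {x | v ∈ β x}, Desc T r m x) {p x : ι} (hpm : IsChild T r p m)
    (hxp : Desc T r x p) : v ∉ β x := by
  intro hx
  obtain rfl : x = m := (hxp.trans hT hpm.2).antisymm hT (htop x hx)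
  exact hpm.1.ne (hpm.2.antisymm hT hxp)

lemma IsForgetNode.isChild_of_top (hT : T.IsTree) (hconn : (T.induce {x | v ∈ β x}).Connected)
    {m : ι} (hm : v ∈ β m) (htop : ∀ x ∈ {x | v ∈ β x}, Desc T r m x) {p : ι}
    (hp : IsForgetNode T r β v p) : IsChild T r p m := by
  obtain ⟨c, hpc, -, hc, hβ⟩ := hp
  obtain rfl | hcm := eq_or_ne c m
  · exact hpc
  · have hmp : Desc T r m p := (htop c hc).of_isChild hT hpc hcm.symm
    exact absurd (mem_of_desc_of_desc hT hconn hm hc hmp hpc.2) (by simp [hβ])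

end NiceDecomposition

theorem stmt_4_general {V : Type*} {ι : Type*} (B : SimpleGraph V) (W U : Set V)
    (T : SimpleGraph ι) (r : ι) (hT : T.IsTree) (β : ι → Set V)
    (hD : IsTreeDecompOn B Set.univ T β) (hnice : IsNice T r β)
    (t : ι) (v : V) (hv : v ∈ fakeSet B W U T r β t) :
    ∃ t', (IsForgetNode T r β v t' ∧ v ∈ fakeSet B W U T r β t') ∧
      (∀ t'', IsForgetNode T r β v t'' ∧ v ∈ fakeSet B W U T r β t'' → t'' = t') ∧
      Desc T r t t' ∧
      ∀ p : T.Walk t' t, p.IsPath → ∀ t'' ∈ p.support, v ∈ fakeSet B W U T r β t'' := by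
  obtain ⟨hvt, s, ⟨hst, hsU⟩, hsv, t₀, htt₀, hvt₀⟩ := mem_fakeSet_iff.mp hv
  have hconn (a : V) : (T.induce {x | a ∈ β x}).Connected := hD.conn a (Set.mem_univ a)
  obtain ⟨m, hvm, htop⟩ := exists_top hT r (hconn v)
  have hmr : m ≠ r := by
    rintro rfl
    simp [hnice.1] at hvm
  obtain ⟨t', ht'm⟩ := exists_isChild_of_ne_root hT hmr
  have htm : Desc T r t m := (htt₀.total hT (htop t₀ hvt₀)).resolve_right fun hmt =>
    hvt (mem_of_desc_of_desc hT (hconn v) hvm hvt₀ hmt htt₀)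
  have htt' : Desc T r t t' := htm.of_isChild hT ht'm (by rintro rfl; exact hvt hvm)
  obtain ⟨te, hste, hvte⟩ := hD.edge_mem hsv
  have hfake (x : ι) (htx : Desc T r t x) (hxt' : Desc T r x t') :
      v ∈ fakeSet B W U T r β x := by
    have hxm := hxt'.trans hT ht'm.2
    have hsx := mem_of_desc_of_desc hT (hconn s) hst hste htx (hxm.trans hT (htop te hvte))
    exact mem_fakeSet_iff.mpr
      ⟨notMem_of_desc_parent_of_top hT htop ht'm hxt', s, ⟨hsx, hsU⟩, hsv, m, hxm, hvm⟩
  have hforget := isForgetNode_of_isChild hnice ht'm hvm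
    (notMem_of_desc_parent_of_top hT htop ht'm (Desc.refl T r t'))
  refine ⟨t', ⟨hforget, hfake t' htt' (Desc.refl T r t')⟩, ?_, htt', ?_⟩
  · rintro t'' ⟨hforget'', -⟩
    exact (hforget''.isChild_of_top hT (hconn v) hvm htop).unique hT ht'm
  · intro p hp x hx
    rw [hT.eq_path hp] at hx
    obtain ⟨htx, hxt'⟩ := desc_of_mem_support_path hT htt' hx
    exact hfake x htx hxt'

/-- for `v ∈ Fake(t)` there is a unique fake-introduce(v) node `t'`
(a forget(v) node of `D` with `v ∈ Fake(t')`), `t` is `t'` or an ancestor of `t'`,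
and `v ∈ Fake(t'')` for every node `t''` on the path between `t` and `t'`. -/
theorem stmt_4 {V : Type*} {ι : Type*} (B : SimpleGraph V) (W U : Set V)
    (hbip : IsBipartition B W U)
    (T : SimpleGraph ι) (r : ι) (hT : T.IsTree) (β : ι → Set V)
    (hD : IsTreeDecompOn B Set.univ T β) (hnice : IsNice T r β)
    (t : ι) (v : V) (hv : v ∈ fakeSet B W U T r β t) :
    ∃ t', (IsForgetNode T r β v t' ∧ v ∈ fakeSet B W U T r β t') ∧
      (∀ t'', IsForgetNode T r β v t'' ∧ v ∈ fakeSet B W U T r β t'' → t'' = t') ∧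
      Desc T r t t' ∧
      ∀ p : T.Walk t' t, p.IsPath → ∀ t'' ∈ p.support, v ∈ fakeSet B W U T r β t'' :=
  stmt_4_general B W U T r hT β hD hnice t v hv
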